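/- arXiv:2310.00695 — 6 statements merged into one kernel-verified Lean document; each statement's English description precedes it below -/
import Mathlib

section
/- The function x ↦ (sin(πα)/(πα)) · 1/(1 + 2·cos(πα)·x + x²) on (0,∞) is a probability density function for every α ∈ (0,1), i.e., it is nonnegative and integrates to 1 over (0,∞). -/
open Real Set Filter

/-! Completing the square, `1 + 2 cos θ x + x² = (x + cos θ)² + sin² θ`, so the kernel has the
antiderivative `arctan ((x + cos θ) / sin θ) / sin θ`. Its increment over `(0, ∞)` is
`(π/2 - arctan (cot θ)) / sin θ = θ / sin θ`, which is exactly cancelled by the normalization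
`sin (πα) / (πα)` at `θ = πα`. -/

lemma one_add_two_cos_mul_add_sq (θ x : ℝ) :
    1 + 2 * cos θ * x + x ^ 2 = (x + cos θ) ^ 2 + sin θ ^ 2 := by
  linear_combination -sin_sq_add_cos_sq θ

lemma one_add_two_cos_mul_add_sq_pos {θ : ℝ} (hθ : sin θ ≠ 0) (x : ℝ) :
    0 < 1 + 2 * cos θ * x + x ^ 2 := by
  rw [one_add_two_cos_mul_add_sq]
  positivity

lemma hasDerivAt_arctan_add_cos_div_sin {θ : ℝ} (hθ : sin θ ≠ 0) (x : ℝ) :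
    HasDerivAt (fun x ↦ arctan ((x + cos θ) / sin θ) / sin θ)
      (1 / (1 + 2 * cos θ * x + x ^ 2)) x := by
  have hinner : HasDerivAt (fun x ↦ (x + cos θ) / sin θ) (1 / sin θ) x :=
    ((hasDerivAt_id x).add_const (cos θ)).div_const (sin θ)
  refine (((hasDerivAt_arctan _).comp x hinner).div_const (sin θ)).congr_deriv ?_
  rw [one_add_two_cos_mul_add_sq]
  field_simp
  ring

lemma arctan_cos_div_sin {θ : ℝ} (h0 : 0 < θ) (hπ : θ < π) :
    arctan (cos θ / sin θ) = π / 2 - θ := by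
  have hcot : cos θ / sin θ = tan (π / 2 - θ) := by
    rw [tan_eq_sin_div_cos, sin_pi_div_two_sub, cos_pi_div_two_sub]
  rw [hcot, arctan_tan (by linarith) (by linarith)]

theorem integral_Ioi_one_div_one_add_two_cos_mul_add_sq {θ : ℝ} (h0 : 0 < θ) (hπ : θ < π) :
    ∫ x in Ioi (0 : ℝ), 1 / (1 + 2 * cos θ * x + x ^ 2) = θ / sin θ := by
  have hs : 0 < sin θ := sin_pos_of_pos_of_lt_pi h0 hπ
  have hlim : Tendsto (fun x ↦ arctan ((x + cos θ) / sin θ) / sin θ) atTop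
      (nhds (π / 2 / sin θ)) :=
    ((tendsto_arctan_atTop.mono_right nhdsWithin_le_nhds).comp
      ((tendsto_atTop_add_const_right _ _ tendsto_id).atTop_div_const hs)).div_const _
  rw [MeasureTheory.integral_Ioi_of_hasDerivAt_of_nonneg
      (by fun_prop : Continuous fun x ↦ arctan ((x + cos θ) / sin θ) / sin θ).continuousWithinAt
      (fun x _ ↦ hasDerivAt_arctan_add_cos_div_sin hs.ne' x)
      (fun x _ ↦ (one_div_pos.2 (one_add_two_cos_mul_add_sq_pos hs.ne' x)).le) hlim,
    zero_add, arctan_cos_div_sin h0 hπ]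
  ring

/-- The generalized Cauchy kernel `x ↦ (sin(πα)/(πα)) / (1 + 2cos(πα)x + x²)` is a
probability density on `(0,∞)` for every `α ∈ (0,1)`. -/
theorem generalized_cauchy_is_pdf (α : ℝ) (hα : α ∈ Ioo (0:ℝ) 1) :
    (∀ x ∈ Ioi (0:ℝ),
        0 ≤ Real.sin (π * α) / (π * α) * (1 / (1 + 2 * Real.cos (π * α) * x + x ^ 2))) ∧
    ∫ x in Ioi (0:ℝ),
        Real.sin (π * α) / (π * α) * (1 / (1 + 2 * Real.cos (π * α) * x + x ^ 2)) = 1 := by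
  obtain ⟨hα0, hα1⟩ := hα
  have hθ0 : 0 < π * α := by positivity
  have hθπ : π * α < π := mul_lt_of_lt_one_right pi_pos hα1
  have hs : 0 < sin (π * α) := sin_pos_of_pos_of_lt_pi hθ0 hθπ
  refine ⟨fun x _ ↦ ?_, ?_⟩
  · have := one_add_two_cos_mul_add_sq_pos hs.ne' x
    positivity
  · rw [MeasureTheory.integral_const_mul,
      integral_Ioi_one_div_one_add_two_cos_mul_add_sq hθ0 hθπ]
    field_simp
end

section
/- For α ∈ (0,1), the function λ ↦ λ^α on [0,∞) admits the Frullani-type representation λ^α = (α sin(απ)/π) ∫₀^∞ log(1 + λ/x) · x^{α-1} dx for all λ ≥ 0. -/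
/-!
Writing `log (1 + λ / x) = ∫₀^λ ds / (x + s)` and exchanging the order of integration reduces the
claim to `∫₀^∞ x^(α-1) / (x + s) dx = s^(α-1) π / sin (π α)`. The substitution `x = u / (1 - u)`
turns the case `s = 1` into the Beta integral `B(α, 1 - α) = Γ(α) Γ(1 - α) = π / sin (π α)`.
-/

open Real Set MeasureTheory

theorem sin_pi_mul_pos {a : ℝ} (ha : a ∈ Ioo (0:ℝ) 1) : 0 < sin (π * a) :=
  sin_pos_of_pos_of_lt_pi (by nlinarith [pi_pos, ha.1]) (by nlinarith [pi_pos, ha.2])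

theorem integral_rpow_mul_one_sub_rpow {a b : ℝ} (ha : 0 < a) (hb : 0 < b) :
    ∫ x in (0:ℝ)..1, x ^ (a - 1) * (1 - x) ^ (b - 1) = Gamma a * Gamma b / Gamma (a + b) := by
  have hbeta := Complex.betaIntegral_eq_Gamma_mul_div a b (by simpa using ha) (by simpa using hb)
  have hcongr : EqOn (fun x : ℝ => ((x ^ (a - 1) * (1 - x) ^ (b - 1) : ℝ) : ℂ))
      (fun x : ℝ => (x : ℂ) ^ ((a : ℂ) - 1) * (1 - (x : ℂ)) ^ ((b : ℂ) - 1)) (uIcc 0 1) := by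
    intro x hx
    rw [uIcc_of_le zero_le_one] at hx
    push_cast
    rw [Complex.ofReal_cpow hx.1, Complex.ofReal_cpow (sub_nonneg.2 hx.2)]
    push_cast; rfl
  rw [Complex.betaIntegral, ← intervalIntegral.integral_congr hcongr,
    intervalIntegral.integral_ofReal, ← Complex.ofReal_add,
    Complex.Gamma_ofReal, Complex.Gamma_ofReal, Complex.Gamma_ofReal] at hbeta
  exact_mod_cast hbeta

theorem integral_rpow_mul_one_sub_rpow_neg_eq_pi_div_sin {a : ℝ} (ha : a ∈ Ioo (0:ℝ) 1) :
    ∫ x in (0:ℝ)..1, x ^ (a - 1) * (1 - x) ^ (-a) = π / sin (π * a) := by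
  have h := integral_rpow_mul_one_sub_rpow ha.1 (sub_pos.2 ha.2)
  rwa [sub_sub_cancel_left, add_sub_cancel, Gamma_one, div_one, Gamma_mul_Gamma_one_sub] at h

theorem image_div_one_sub_Ioo : (fun u : ℝ => u / (1 - u)) '' Ioo 0 1 = Ioi 0 := by
  ext y
  constructor
  · rintro ⟨u, ⟨hu0, hu1⟩, rfl⟩
    exact div_pos hu0 (sub_pos.2 hu1)
  · intro (hy : 0 < y)
    refine ⟨y / (1 + y), ⟨by positivity, (div_lt_one (by positivity)).2 (by linarith)⟩, ?_⟩
    field_simp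
    ring

theorem injOn_div_one_sub : InjOn (fun u : ℝ => u / (1 - u)) (Ioo 0 1) := by
  intro x ⟨_, hx⟩ y ⟨_, hy⟩ h
  have := sub_pos.2 hx
  have := sub_pos.2 hy
  field_simp at h
  linarith

theorem hasDerivAt_div_one_sub {u : ℝ} (hu : u ≠ 1) :
    HasDerivAt (fun u : ℝ => u / (1 - u)) ((1 - u)⁻¹ ^ 2) u := by
  have h1u : 1 - u ≠ 0 := sub_ne_zero.2 hu.symm
  refine ((hasDerivAt_id' u).div ((hasDerivAt_id' u).const_sub 1) h1u).congr_deriv ?_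
  field_simp
  ring

theorem integral_Ioi_rpow_div_one_add {a : ℝ} (ha : a ∈ Ioo (0:ℝ) 1) :
    ∫ x in Ioi (0:ℝ), x ^ (a - 1) / (1 + x) = π / sin (π * a) := by
  have hsubst := integral_image_eq_integral_abs_deriv_smul measurableSet_Ioo
    (fun u hu => (hasDerivAt_div_one_sub hu.2.ne).hasDerivWithinAt) injOn_div_one_sub
    (fun x : ℝ => x ^ (a - 1) / (1 + x))
  have hintegrand : EqOn
      (fun u : ℝ => |(1 - u)⁻¹ ^ 2| • ((u / (1 - u)) ^ (a - 1) / (1 + u / (1 - u))))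
      (fun u => u ^ (a - 1) * (1 - u) ^ (-a)) (Ioo 0 1) := by
    intro u ⟨hu0, hu1⟩
    dsimp only
    have hu1 : 0 < 1 - u := sub_pos.2 hu1
    have hden : 1 + u / (1 - u) = (1 - u)⁻¹ := by field_simp; ring
    rw [hden, div_rpow hu0.le hu1.le, abs_of_nonneg (by positivity), smul_eq_mul,
      rpow_sub hu1, rpow_neg hu1.le, rpow_one]
    field_simp
  rw [image_div_one_sub_Ioo, setIntegral_congr_fun measurableSet_Ioo hintegrand,
    ← integral_Ioc_eq_integral_Ioo, ← intervalIntegral.integral_of_le zero_le_one] at hsubst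
  rw [hsubst, integral_rpow_mul_one_sub_rpow_neg_eq_pi_div_sin ha]

theorem integral_Ioi_rpow_div_add {a s : ℝ} (ha : a ∈ Ioo (0:ℝ) 1) (hs : 0 < s) :
    ∫ x in Ioi (0:ℝ), x ^ (a - 1) / (x + s) = s ^ (a - 1) * (π / sin (π * a)) := by
  have hscale := integral_comp_mul_left_Ioi (fun x : ℝ => x ^ (a - 1) / (x + s)) 0 hs
  have hintegrand : EqOn (fun x : ℝ => (s * x) ^ (a - 1) / (s * x + s))
      (fun x => s ^ (a - 1) / s * (x ^ (a - 1) / (1 + x))) (Ioi 0) := by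
    intro x (hx : 0 < x)
    dsimp only
    rw [mul_rpow hs.le hx.le]
    field_simp
    ring
  rw [mul_zero, setIntegral_congr_fun measurableSet_Ioi hintegrand, integral_const_mul,
    integral_Ioi_rpow_div_one_add ha, smul_eq_mul] at hscale
  rw [← (eq_inv_mul_iff_mul_eq₀ hs.ne').1 hscale]
  field_simp

theorem log_one_add_div_eq_integral_inv_add {x l : ℝ} (hx : 0 < x) (hl : 0 ≤ l) :
    log (1 + l / x) = ∫ s in (0:ℝ)..l, (x + s)⁻¹ := by
  rw [intervalIntegral.integral_comp_add_left (fun s => s⁻¹), add_zero,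
    integral_inv_of_pos hx (by linarith), add_div, div_self hx.ne']

theorem lintegral_rpow_div_add_eq_ofReal {a s : ℝ} (ha : a ∈ Ioo (0:ℝ) 1) (hs : 0 < s) :
    ∫⁻ x in Ioi (0:ℝ), ENNReal.ofReal (x ^ (a - 1) / (x + s)) =
      ENNReal.ofReal (s ^ (a - 1) * (π / sin (π * a))) := by
  have hsin := sin_pi_mul_pos ha
  have hintegral := integral_Ioi_rpow_div_add ha hs
  have hint : IntegrableOn (fun x : ℝ => x ^ (a - 1) / (x + s)) (Ioi 0) :=
    Integrable.of_integral_ne_zero (by rw [hintegral]; positivity)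
  rw [← hintegral, ofReal_integral_eq_lintegral_ofReal hint]
  filter_upwards [ae_restrict_mem measurableSet_Ioi] with x (hx : 0 < x)
  positivity

theorem ofReal_log_one_add_div_mul_rpow_eq_lintegral {x l : ℝ} (r : ℝ) (hx : 0 < x) (hl : 0 ≤ l) :
    ENNReal.ofReal (log (1 + l / x) * x ^ r) =
      ∫⁻ s in Ioc 0 l, ENNReal.ofReal (x ^ r / (x + s)) := by
  have hcont : ContinuousOn (fun s => x ^ r / (x + s)) (Icc 0 l) :=
    continuousOn_const.div (continuousOn_const.add continuousOn_id) fun s hs => by linarith [hs.1]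
  rw [← ofReal_integral_eq_lintegral_ofReal (hcont.integrableOn_Icc.mono_set Ioc_subset_Icc_self),
    ← intervalIntegral.integral_of_le hl, log_one_add_div_eq_integral_inv_add hx hl,
    ← intervalIntegral.integral_mul_const]
  · simp only [div_eq_inv_mul]
  · filter_upwards [ae_restrict_mem measurableSet_Ioc] with s hs
    have := hs.1
    positivity

theorem integral_log_one_add_div_mul_rpow {α l : ℝ} (hα : α ∈ Ioo (0:ℝ) 1) (hl : 0 ≤ l) :
    ∫ x in Ioi (0:ℝ), log (1 + l / x) * x ^ (α - 1) = l ^ α / α * (π / sin (π * α)) := by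
  set c := π / sin (π * α)
  have hc : 0 < c := div_pos pi_pos (sin_pi_mul_pos hα)
  have houter : ∫⁻ s in Ioc 0 l, ENNReal.ofReal (s ^ (α - 1) * c) =
      ENNReal.ofReal (l ^ α / α * c) := by
    have hint : IntegrableOn (fun s : ℝ => s ^ (α - 1) * c) (Ioc 0 l) :=
      (intervalIntegral.intervalIntegrable_rpow' (by linarith [hα.1])).1.mul_const c
    rw [← ofReal_integral_eq_lintegral_ofReal hint, integral_mul_const,
      ← intervalIntegral.integral_of_le hl, integral_rpow (Or.inl (by linarith [hα.1])),
      sub_add_cancel, zero_rpow hα.1.ne', sub_zero]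
    filter_upwards [ae_restrict_mem measurableSet_Ioc] with s hs
    have := hs.1
    positivity
  have hmeas : AEMeasurable
      (Function.uncurry fun x s : ℝ => ENNReal.ofReal (x ^ (α - 1) / (x + s)))
      ((volume.restrict (Ioi 0)).prod (volume.restrict (Ioc 0 l))) :=
    Measurable.aemeasurable (by fun_prop)
  -- Passing to lower integrals lets Tonelli swap the integrals with no integrability to check.
  rw [integral_eq_lintegral_of_nonneg_ae,
    setLIntegral_congr_fun measurableSet_Ioi
      fun x hx => ofReal_log_one_add_div_mul_rpow_eq_lintegral (α - 1) hx hl,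
    lintegral_lintegral_swap hmeas,
    setLIntegral_congr_fun measurableSet_Ioc fun s hs => lintegral_rpow_div_add_eq_ofReal hα hs.1,
    houter, ENNReal.toReal_ofReal (mul_nonneg (div_nonneg (rpow_nonneg hl _) hα.1.le) hc.le)]
  · filter_upwards [ae_restrict_mem measurableSet_Ioi] with x (hx : 0 < x)
    have : 0 ≤ log (1 + l / x) := log_nonneg (le_add_of_nonneg_right (by positivity))
    positivity
  · exact Measurable.aestronglyMeasurable (by fun_prop)

/-- Frullani/Thorin representation of `λ^α`:
`λ^α = (α sin(απ)/π) ∫₀^∞ log(1 + λ/x) x^{α-1} dx` for `λ ≥ 0`, `α ∈ (0,1)`. -/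
theorem rpow_eq_thorin_integral (α : ℝ) (hα : α ∈ Ioo (0:ℝ) 1) (l : ℝ) (hl : 0 ≤ l) :
    l ^ α =
      α * Real.sin (α * π) / π *
        ∫ x in Ioi (0:ℝ), Real.log (1 + l / x) * x ^ (α - 1) := by
  have hsin : sin (α * π) ≠ 0 := mul_comm π α ▸ (sin_pi_mul_pos hα).ne'
  rw [integral_log_one_add_div_mul_rpow hα hl, mul_comm π α]
  field_simp [hα.1.ne', pi_pos.ne']
end

section
/- For α ∈ (1,2], define A(x) = (α-1)x^{2α} + α x^{2α-1} + 2cos(πα)x^α + α x + α - 1 for x ≥ 0. Then A(x) > 0 for all x ≥ 0. -/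
open Real Set

/-- For `α ∈ (1,2]`, `A(x) = (α-1)x^{2α} + αx^{2α-1} + 2cos(πα)x^α + αx + α-1 > 0`
for all `x ≥ 0`. -/
theorem A_pos (α : ℝ) (hα : α ∈ Ioc (1:ℝ) 2) (x : ℝ) (hx : 0 ≤ x) :
    0 < (α - 1) * x ^ (2 * α) + α * x ^ (2 * α - 1) +
        2 * Real.cos (π * α) * x ^ α + α * x + α - 1 := by
  obtain ⟨h1, h2⟩ := hα
  rcases eq_or_lt_of_le hx with h0 | hxpos
  · rw [← h0]
    rw [Real.zero_rpow (by linarith), Real.zero_rpow (by linarith),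
      Real.zero_rpow (by linarith)]
    linarith
  · -- AM-GM: x^(2α-1) + x ≥ 2 x^α
    have ha : x ^ (2 * α - 1) = x ^ (α - 1/2) * x ^ (α - 1/2) := by
      rw [← Real.rpow_add hxpos]; ring_nf
    have hb : x = x ^ ((1:ℝ)/2) * x ^ ((1:ℝ)/2) := by
      rw [← Real.rpow_add hxpos]; norm_num
    have hc : x ^ α = x ^ (α - 1/2) * x ^ ((1:ℝ)/2) := by
      rw [← Real.rpow_add hxpos]; ring_nf
    have key : 2 * x ^ α ≤ x ^ (2 * α - 1) + x := by
      rw [ha, hc]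
      nlinarith [sq_nonneg (x ^ (α - 1/2) - x ^ ((1:ℝ)/2)), hb]
    have hcos : -1 ≤ Real.cos (π * α) := Real.neg_one_le_cos _
    have hxa : (0:ℝ) ≤ x ^ α := Real.rpow_nonneg hx _
    have hx2a : (0:ℝ) ≤ x ^ (2 * α) := Real.rpow_nonneg hx _
    nlinarith [mul_le_mul_of_nonneg_right hcos hxa]
end

section
/- For α ∈ (1/2,1), define A(x) = (1-α)(x^α + x^{-α}) - α(x^{1-α} + x^{α-1}) - 2cos(πα) for x > 0. Then A(x) ≥ A(1) = 2(1 - 2α - cos(πα)) > 0 for all x > 0. -/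
open Real Set

lemma convexOn_sinh_Ici : ConvexOn ℝ (Ici (0:ℝ)) Real.sinh := by
  apply convexOn_of_deriv2_nonneg (convex_Ici 0) Real.continuous_sinh.continuousOn
    (Real.differentiable_sinh.differentiableOn)
  · rw [Real.deriv_sinh]
    exact Real.differentiable_cosh.differentiableOn
  · intro x hx
    rw [interior_Ici, mem_Ioi] at hx
    simp only [Function.iterate_succ, Function.iterate_zero, Function.comp_apply, Function.id_def,
      Real.deriv_sinh, Real.deriv_cosh]
    exact (Real.sinh_pos_iff.2 hx).le

/-- `sinh (c*u) ≥ c * sinh u` for `c ≥ 1`, `u ≥ 0`. -/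
lemma sinh_mul_ge (c u : ℝ) (hc : 1 ≤ c) (hu : 0 ≤ u) : c * Real.sinh u ≤ Real.sinh (c * u) := by
  have hc0 : 0 < c := lt_of_lt_of_le one_pos hc
  have key := convexOn_sinh_Ici.2 (mem_Ici.2 (mul_nonneg hc0.le hu)) (mem_Ici.2 (le_refl (0:ℝ)))
    (show (0:ℝ) ≤ 1/c by positivity)
    (show (0:ℝ) ≤ 1 - 1/c by rw [sub_nonneg]; exact div_le_one_of_le₀ hc hc0.le)
    (show 1/c + (1 - 1/c) = 1 by ring)
  simp only [smul_eq_mul, mul_zero, Real.sinh_zero, add_zero] at key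
  have h1 : 1/c * (c * u) = u := by field_simp
  rw [h1] at key
  calc c * Real.sinh u ≤ c * (1/c * Real.sinh (c*u)) := mul_le_mul_of_nonneg_left key hc0.le
    _ = Real.sinh (c * u) := by field_simp

/-- `b * sinh (a*u) ≥ a * sinh (b*u)` for `a ≥ b ≥ 0`, `u ≥ 0`. -/
lemma sinh_lemma (a b u : ℝ) (hb : 0 ≤ b) (hab : b ≤ a) (hu : 0 ≤ u) :
    a * Real.sinh (b * u) ≤ b * Real.sinh (a * u) := by
  rcases eq_or_lt_of_le hb with h | hb0
  · simp [← h]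
  · have hc : 1 ≤ a / b := (one_le_div hb0).2 hab
    have key := sinh_mul_ge (a/b) (b*u) hc (mul_nonneg hb0.le hu)
    have h1 : a / b * (b * u) = a * u := by field_simp
    rw [h1] at key
    calc a * Real.sinh (b*u) = b * (a/b * Real.sinh (b*u)) := by field_simp
      _ ≤ b * Real.sinh (a*u) := mul_le_mul_of_nonneg_left key hb0.le

lemma cosh_sub_one (t : ℝ) : Real.cosh t - 1 = 2 * Real.sinh (t/2) ^ 2 := by
  have h2 : t = 2 * (t/2) := by ring
  rw [h2, Real.cosh_two_mul, Real.cosh_sq]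
  ring

/-- `b * (cosh (a*u) - 1) ≥ a * (cosh (b*u) - 1)` for `a ≥ b > 0`. -/
lemma cosh_lemma (a b u : ℝ) (hb : 0 < b) (hab : b ≤ a) :
    a * (Real.cosh (b * u) - 1) ≤ b * (Real.cosh (a * u) - 1) := by
  wlog hu : 0 ≤ u generalizing u
  · have := this (-u) (by linarith)
    simpa [mul_neg, Real.cosh_neg] using this
  have ha0 : 0 < a := lt_of_lt_of_le hb hab
  have key := sinh_lemma a b (u/2) hb.le hab (by linarith)
  have hbs : 0 ≤ a * Real.sinh (b * (u/2)) :=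
    mul_nonneg ha0.le (Real.sinh_nonneg_iff.2 (mul_nonneg hb.le (by linarith)))
  have hsq : (a * Real.sinh (b * (u/2)))^2 ≤ (b * Real.sinh (a * (u/2)))^2 :=
    pow_le_pow_left₀ hbs key 2
  rw [cosh_sub_one (b*u), cosh_sub_one (a*u)]
  have h1 : a * u / 2 = a * (u/2) := by ring
  have h2 : b * u / 2 = b * (u/2) := by ring
  rw [h1, h2]
  nlinarith [hsq, mul_nonneg (mul_nonneg (sub_nonneg.2 hab) hb.le)
    (sq_nonneg (Real.sinh (a * (u/2)))), ha0, hb]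

/-- For `α ∈ (1/2,1)` and `A(x) = (1-α)(x^α + x^{-α}) - α(x^{1-α} + x^{α-1}) - 2cos(πα)`,
one has `A(x) ≥ A(1) = 2(1 - 2α - cos(πα)) > 0` for all `x > 0`. -/
theorem A2_ge_A2_one (α : ℝ) (hα : α ∈ Ioo (1/2 : ℝ) 1) :
    (∀ x : ℝ, 0 < x →
      (1 - α) * ((1:ℝ) ^ α + (1:ℝ) ^ (-α)) - α * ((1:ℝ) ^ (1 - α) + (1:ℝ) ^ (α - 1)) -
          2 * Real.cos (π * α) ≤
        (1 - α) * (x ^ α + x ^ (-α)) - α * (x ^ (1 - α) + x ^ (α - 1)) -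
          2 * Real.cos (π * α)) ∧
    (1 - α) * ((1:ℝ) ^ α + (1:ℝ) ^ (-α)) - α * ((1:ℝ) ^ (1 - α) + (1:ℝ) ^ (α - 1)) -
        2 * Real.cos (π * α) = 2 * (1 - 2 * α - Real.cos (π * α)) ∧
    0 < 2 * (1 - 2 * α - Real.cos (π * α)) := by
  obtain ⟨h1, h2⟩ := hα
  have hα0 : 0 < α := by linarith
  have hα1 : 0 < 1 - α := by linarith
  refine ⟨?_, ?_, ?_⟩
  · intro x hx
    simp only [Real.one_rpow]
    set t := Real.log x with ht
    have hrw : ∀ y : ℝ, x ^ y = Real.exp (y * t) := by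
      intro y
      rw [Real.rpow_def_of_pos hx, mul_comm]
    have e1 : x ^ α + x ^ (-α) = 2 * Real.cosh (α * t) := by
      rw [hrw, hrw, Real.cosh_eq, neg_mul]; ring
    have e2 : x ^ (1-α) + x ^ (α-1) = 2 * Real.cosh ((1-α) * t) := by
      rw [hrw, hrw, Real.cosh_eq]
      have h3 : (α - 1) * t = -((1-α)*t) := by ring
      rw [h3]; ring
    rw [e1, e2]
    have key := cosh_lemma α (1-α) t hα1 (by linarith)
    nlinarith
  · simp only [Real.one_rpow]; ring
  · have hpi := Real.pi_pos
    have hcos : Real.cos (π * α) < 1 - 2 * α := by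
      set β := 1 - α with hβ
      have hβ0 : 0 < β := by simp [hβ]; linarith
      have hβh : β < 1/2 := by simp [hβ]; linarith
      have heq : Real.cos (π * α) = -Real.cos (π * β) := by
        rw [hβ]
        have : π * α = π - π * (1 - α) := by ring
        rw [this, Real.cos_pi_sub]
      rw [heq]
      have hconc := strictConcaveOn_cos_Icc
      have hmem0 : (0:ℝ) ∈ Icc (-(π/2)) (π/2) := ⟨by linarith, by linarith⟩
      have hmemh : (π/2 : ℝ) ∈ Icc (-(π/2)) (π/2) := ⟨by linarith, le_refl _⟩
      have hne : (0:ℝ) ≠ π/2 := by linarith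
      have key := hconc.2 hmem0 hmemh hne (show (0:ℝ) < 1 - 2*β by linarith)
        (show (0:ℝ) < 2*β by linarith) (by ring)
      simp only [smul_eq_mul, mul_zero, Real.cos_zero, Real.cos_pi_div_two, zero_add,
        mul_one, mul_zero, add_zero] at key
      have harg : (2*β) * (π/2) = π * β := by ring
      rw [harg] at key
      linarith
    linarith
end

section
/- For c ∈ (0,1), let G₁, G_{1-c}, G_c be independent gamma random variables with shape parameters 1, 1-c, c respectively (rate 1). Then E[exp(-λ · G₁·G_{1-c}/G_c)] = (1 - λ^c)/(1 - λ) for λ ≥ 0, λ ≠ 1, and equals c at λ = 1. -/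
/-!
Integrating out the exponential variable `G₁` turns the Laplace transform into
`E[(1 + λ G_{1-c} / G_c)⁻¹]`. By Fubini and the substitution `y = z u`, the ratio of
independent `Γ(a)` and `Γ(b)` variables has density
`u^(a-1) (1+u)^(-(a+b)) Γ(a+b) / (Γ(a) Γ(b))` on `(0, ∞)`; its total mass being `1` is the
beta integral. This leaves `∫ u^(-c) / ((1+u)(1+λu)) du / (Γ(1-c) Γ(c))`, which partial
fractions and the scaling `∫ u^(-c) / (1+λu) du = λ^(c-1) ∫ u^(-c) / (1+u) du` reduce to beta
integrals; at `λ = 1` it is the beta integral with parameters `1 - c` and `1 + c`.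
-/

open Real Set MeasureTheory ProbabilityTheory

theorem integrableOn_rpow_mul_exp_neg_mul {a r : ℝ} (ha : 0 < a) (hr : 0 < r) :
    IntegrableOn (fun t : ℝ => t ^ (a - 1) * exp (-(r * t))) (Ioi 0) := by
  simpa [neg_mul] using integrableOn_rpow_mul_exp_neg_mul_rpow (s := a - 1) (by linarith) one_pos hr

theorem measurable_gammaPDF (a r : ℝ) : Measurable (gammaPDF a r) :=
  (measurable_gammaPDFReal a r).ennreal_ofReal

theorem integral_gammaMeasure {a : ℝ} (ha : 0 < a) (g : ℝ → ℝ) :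
    ∫ x, g x ∂gammaMeasure a 1 = ∫ x in Ioi 0, x ^ (a - 1) * exp (-x) / Gamma a * g x := by
  rw [gammaMeasure, integral_withDensity_eq_integral_toReal_smul (measurable_gammaPDF a 1)
    (ae_of_all _ fun _ => ENNReal.ofReal_lt_top), ← integral_Ici_eq_integral_Ioi,
    ← setIntegral_eq_integral_of_forall_compl_eq_zero]
  · refine setIntegral_congr_fun measurableSet_Ici fun x (hx : 0 ≤ x) => ?_
    rw [gammaPDF, ENNReal.toReal_ofReal (gammaPDFReal_nonneg ha one_pos x), gammaPDFReal, if_pos hx,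
      one_rpow, one_mul, smul_eq_mul]
    ring_nf
  · intro x (hx : ¬ 0 ≤ x)
    rw [gammaPDF, gammaPDFReal, if_neg hx, ENNReal.ofReal_zero, ENNReal.toReal_zero, zero_smul]

theorem gammaMeasure_ae_pos {a r : ℝ} : ∀ᵐ x ∂gammaMeasure a r, 0 < x := by
  rw [gammaMeasure, ae_withDensity_iff (measurable_gammaPDF a r)]
  filter_upwards [volume.ae_ne 0] with x hx0 hx
  exact (lt_or_gt_of_ne hx0).resolve_left fun hneg => hx (gammaPDF_of_neg hneg)

theorem integral_exp_neg_mul_gammaMeasure {a s : ℝ} (ha : 0 < a) (hs : -1 < s) :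
    ∫ x, exp (-(x * s)) ∂gammaMeasure a 1 = (1 + s) ^ (-a) := by
  have hs' : 0 < 1 + s := by linarith
  calc ∫ x, exp (-(x * s)) ∂gammaMeasure a 1
      = (∫ x in Ioi 0, x ^ (a - 1) * exp (-((1 + s) * x))) / Gamma a := by
        rw [integral_gammaMeasure ha, ← integral_div]
        refine setIntegral_congr_fun measurableSet_Ioi fun x _ => ?_
        rw [show -((1 + s) * x) = -x + -(x * s) by ring, exp_add]
        ring
    _ = (1 + s) ^ (-a) := by
        rw [integral_rpow_mul_exp_neg_mul_Ioi ha hs', mul_div_assoc,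
          div_self (Gamma_pos_of_pos ha).ne', mul_one, one_div, inv_rpow hs'.le, rpow_neg hs'.le]

theorem integral_exp_neg_mul_of_indepFun {Ω : Type*} [MeasurableSpace Ω] {μ : Measure Ω}
    [IsProbabilityMeasure μ] {a : ℝ} (ha : 0 < a) {T V : Ω → ℝ} (hT : Measurable T)
    (hV : Measurable V) (hTV : IndepFun T V μ) (hT_law : μ.map T = gammaMeasure a 1)
    (hV_nonneg : ∀ᵐ ω ∂μ, 0 ≤ V ω) :
    ∫ ω, exp (-(T ω * V ω)) ∂μ = ∫ ω, (1 + V ω) ^ (-a) ∂μ := by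
  have := isProbabilityMeasure_gammaMeasure ha one_pos
  have hT_pos : ∀ᵐ ω ∂μ, 0 < T ω :=
    ae_of_ae_map hT.aemeasurable (hT_law ▸ gammaMeasure_ae_pos)
  have hTV_law : μ.map (fun ω => (T ω, V ω)) = (gammaMeasure a 1).prod (μ.map V) := by
    rw [← hT_law]
    exact (indepFun_iff_map_prod_eq_prod_map_map hT.aemeasurable hV.aemeasurable).1 hTV
  have hg : Measurable fun p : ℝ × ℝ => exp (-(p.1 * p.2)) := by fun_prop
  have hg_int : Integrable (fun p : ℝ × ℝ => exp (-(p.1 * p.2)))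
      ((gammaMeasure a 1).prod (μ.map V)) := by
    rw [← hTV_law, integrable_map_measure hg.aestronglyMeasurable (hT.prodMk hV).aemeasurable]
    refine (integrable_const 1).mono' (by fun_prop) ?_
    filter_upwards [hT_pos, hV_nonneg] with ω hTω hVω
    rw [Function.comp_apply, norm_of_nonneg (exp_pos _).le, exp_le_one_iff, neg_nonpos]
    positivity
  calc ∫ ω, exp (-(T ω * V ω)) ∂μ
      = ∫ p, exp (-(p.1 * p.2)) ∂((gammaMeasure a 1).prod (μ.map V)) := by
        rw [← hTV_law, integral_map (hT.prodMk hV).aemeasurable hg.aestronglyMeasurable]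
    _ = ∫ v, ∫ t, exp (-(t * v)) ∂gammaMeasure a 1 ∂μ.map V := integral_prod_symm _ hg_int
    _ = ∫ v, (1 + v) ^ (-a) ∂μ.map V := by
        refine integral_congr_ae ?_
        filter_upwards [(ae_map_iff hV.aemeasurable measurableSet_Ici).2 hV_nonneg] with v hv
        exact integral_exp_neg_mul_gammaMeasure ha (by linarith)
    _ = ∫ ω, (1 + V ω) ^ (-a) ∂μ := integral_map hV.aemeasurable
        (by fun_prop : Measurable fun v : ℝ => (1 + v) ^ (-a)).aestronglyMeasurable

theorem integrableOn_rpow_mul_one_add_rpow_neg {a b : ℝ} (ha : 0 < a) (hb : 0 < b) :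
    IntegrableOn (fun u : ℝ => u ^ (a - 1) * (1 + u) ^ (-(a + b))) (Ioi 0) := by
  have hmeas : AEStronglyMeasurable (fun u : ℝ => u ^ (a - 1) * (1 + u) ^ (-(a + b))) volume := by
    fun_prop
  rw [← Ioc_union_Ioi_eq_Ioi zero_le_one]
  refine IntegrableOn.union ?_ ?_
  · have h_near_zero : IntegrableOn (fun u : ℝ => u ^ (a - 1)) (Ioc 0 1) := by
      rw [← intervalIntegrable_iff_integrableOn_Ioc_of_le zero_le_one]
      exact intervalIntegral.intervalIntegrable_rpow' (by linarith)
    refine h_near_zero.mono' hmeas.restrict ?_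
    filter_upwards [ae_restrict_mem measurableSet_Ioc] with u hu
    have hu0 : 0 < u := hu.1
    rw [norm_mul, norm_of_nonneg (by positivity), norm_of_nonneg (by positivity)]
    exact mul_le_of_le_one_right (by positivity)
      (rpow_le_one_of_one_le_of_nonpos (by linarith) (by linarith))
  · have h_near_top : IntegrableOn (fun u : ℝ => u ^ (-b - 1)) (Ioi 1) :=
      integrableOn_Ioi_rpow_of_lt (by linarith) one_pos
    refine h_near_top.mono' hmeas.restrict ?_
    filter_upwards [ae_restrict_mem measurableSet_Ioi] with u (hu : 1 < u)
    have hu0 : 0 < u := by linarith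
    rw [norm_mul, norm_of_nonneg (by positivity), norm_of_nonneg (by positivity),
      show -b - 1 = (a - 1) + -(a + b) by ring, rpow_add hu0]
    exact mul_le_mul_of_nonneg_left (rpow_le_rpow_of_nonpos hu0 (by linarith) (by linarith))
      (by positivity)

theorem integral_rpow_mul_exp_neg_one_add_mul {p u : ℝ} (hp : 0 < p) (hu : -1 < u) :
    ∫ z in Ioi 0, z ^ (p - 1) * exp (-((1 + u) * z)) = Gamma p * (1 + u) ^ (-p) := by
  have hu' : 0 < 1 + u := by linarith
  rw [integral_rpow_mul_exp_neg_mul_Ioi hp hu', one_div, inv_rpow hu'.le, rpow_neg hu'.le, mul_comm]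

theorem integral_Ioi_integral_Ioi_mul_rpow_mul_exp {p : ℝ} (hp : 0 < p) {G : ℝ → ℝ}
    (hG : Measurable G) (hG_int : IntegrableOn (fun u => G u * (1 + u) ^ (-p)) (Ioi 0)) :
    ∫ z in Ioi 0, ∫ u in Ioi 0, G u * (z ^ (p - 1) * exp (-((1 + u) * z)))
      = Gamma p * ∫ u in Ioi 0, G u * (1 + u) ^ (-p) := by
  set F : ℝ → ℝ → ℝ := fun z u => G u * (z ^ (p - 1) * exp (-((1 + u) * z)))
  have hF_meas : AEStronglyMeasurable (Function.uncurry F)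
      ((volume.restrict (Ioi 0)).prod (volume.restrict (Ioi 0))) :=
    (by fun_prop : Measurable (Function.uncurry F)).aestronglyMeasurable
  have hF_int : Integrable (Function.uncurry F)
      ((volume.restrict (Ioi 0)).prod (volume.restrict (Ioi 0))) := by
    refine (integrable_prod_iff' hF_meas).2 ⟨?_, ?_⟩
    · filter_upwards [ae_restrict_mem measurableSet_Ioi] with u (hu : 0 < u)
      exact (integrableOn_rpow_mul_exp_neg_mul (r := 1 + u) hp (by linarith)).const_mul (G u)
    · refine (hG_int.norm.mul_const (Gamma p)).congr ?_
      filter_upwards [ae_restrict_mem measurableSet_Ioi] with u (hu : 0 < u)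
      calc ‖G u * (1 + u) ^ (-p)‖ * Gamma p
          = ‖G u‖ * ∫ z in Ioi 0, z ^ (p - 1) * exp (-((1 + u) * z)) := by
            rw [integral_rpow_mul_exp_neg_one_add_mul hp (by linarith), norm_mul,
              norm_of_nonneg (rpow_nonneg (by linarith) _)]
            ring
        _ = ∫ z in Ioi 0, ‖F z u‖ := by
            rw [← integral_const_mul]
            refine setIntegral_congr_fun measurableSet_Ioi fun z (hz : 0 < z) => ?_
            rw [norm_mul, norm_of_nonneg (by positivity : 0 ≤ z ^ (p - 1) * exp (-((1 + u) * z)))]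
  rw [integral_integral_swap hF_int, ← integral_const_mul]
  refine setIntegral_congr_fun measurableSet_Ioi fun u (hu : 0 < u) => ?_
  rw [integral_const_mul, integral_rpow_mul_exp_neg_one_add_mul hp (by linarith)]
  ring

theorem integral_comp_div_gammaMeasure {a z : ℝ} (ha : 0 < a) (hz : 0 < z) (f : ℝ → ℝ) :
    ∫ y, f (y / z) ∂gammaMeasure a 1
      = z ^ a / Gamma a * ∫ u in Ioi 0, f u * (u ^ (a - 1) * exp (-(z * u))) := by
  have h_subst := integral_comp_mul_left_Ioi'
    (fun y => y ^ (a - 1) * exp (-y) / Gamma a * f (y / z)) 0 hz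
  rw [mul_zero, smul_eq_mul] at h_subst
  rw [integral_gammaMeasure ha, ← h_subst, ← integral_const_mul, ← integral_const_mul]
  refine setIntegral_congr_fun measurableSet_Ioi fun u (hu : 0 < u) => ?_
  rw [mul_div_cancel_left₀ u hz.ne', mul_rpow hz.le hu.le,
    show z ^ a = z * z ^ (a - 1) by rw [← rpow_one_add' hz.le (by linarith)]; ring_nf]
  ring

theorem integrable_comp_div_gammaMeasure_prod {a b : ℝ} (ha : 0 < a) (hb : 0 < b) {f : ℝ → ℝ}
    (hf : Measurable f) {M : ℝ} (hf_bdd : ∀ u, 0 < u → |f u| ≤ M) :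
    Integrable (fun p : ℝ × ℝ => f (p.1 / p.2)) ((gammaMeasure a 1).prod (gammaMeasure b 1)) := by
  have := isProbabilityMeasure_gammaMeasure ha one_pos
  have := isProbabilityMeasure_gammaMeasure hb one_pos
  refine (integrable_const M).mono' (hf.comp (by fun_prop)).aestronglyMeasurable ?_
  filter_upwards [Measure.quasiMeasurePreserving_fst.ae gammaMeasure_ae_pos,
    Measure.quasiMeasurePreserving_snd.ae gammaMeasure_ae_pos] with p hp1 hp2
  exact hf_bdd _ (div_pos hp1 hp2)

theorem integral_comp_div_gammaMeasure_prod {a b : ℝ} (ha : 0 < a) (hb : 0 < b) {f : ℝ → ℝ}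
    (hf : Measurable f) {M : ℝ} (hf_bdd : ∀ u, 0 < u → |f u| ≤ M) :
    ∫ p, f (p.1 / p.2) ∂(gammaMeasure a 1).prod (gammaMeasure b 1)
      = Gamma (a + b) / (Gamma a * Gamma b)
        * ∫ u in Ioi 0, f u * (u ^ (a - 1) * (1 + u) ^ (-(a + b))) := by
  have := isProbabilityMeasure_gammaMeasure ha one_pos
  have := isProbabilityMeasure_gammaMeasure hb one_pos
  have hG_int : IntegrableOn (fun u => f u * u ^ (a - 1) * (1 + u) ^ (-(a + b))) (Ioi 0) := by
    simp_rw [mul_assoc]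
    refine (integrableOn_rpow_mul_one_add_rpow_neg ha hb).bdd_mul (c := M)
      hf.aestronglyMeasurable ?_
    filter_upwards [ae_restrict_mem measurableSet_Ioi] with u hu
    exact hf_bdd u hu
  calc ∫ p, f (p.1 / p.2) ∂(gammaMeasure a 1).prod (gammaMeasure b 1)
      = ∫ z, ∫ y, f (y / z) ∂gammaMeasure a 1 ∂gammaMeasure b 1 :=
        integral_prod_symm _ (integrable_comp_div_gammaMeasure_prod ha hb hf hf_bdd)
    _ = ∫ z, z ^ a / Gamma a * (∫ u in Ioi 0, f u * (u ^ (a - 1) * exp (-(z * u))))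
          ∂gammaMeasure b 1 := by
        refine integral_congr_ae ?_
        filter_upwards [gammaMeasure_ae_pos] with z hz
        exact integral_comp_div_gammaMeasure ha hz f
    _ = ∫ z in Ioi 0, (Gamma a * Gamma b)⁻¹
          * ∫ u in Ioi 0, f u * u ^ (a - 1) * (z ^ (a + b - 1) * exp (-((1 + u) * z))) := by
        rw [integral_gammaMeasure hb]
        refine setIntegral_congr_fun measurableSet_Ioi fun z (hz : 0 < z) => ?_
        rw [← integral_const_mul, ← integral_const_mul, ← integral_const_mul]
        refine integral_congr_ae (ae_of_all _ fun u => ?_)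
        dsimp only
        rw [show a + b - 1 = (b - 1) + a by ring, rpow_add hz,
          show -((1 + u) * z) = -z + -(z * u) by ring, exp_add]
        field_simp
    _ = Gamma (a + b) / (Gamma a * Gamma b)
          * ∫ u in Ioi 0, f u * (u ^ (a - 1) * (1 + u) ^ (-(a + b))) := by
        rw [integral_const_mul,
          integral_Ioi_integral_Ioi_mul_rpow_mul_exp (by positivity) (by fun_prop) hG_int]
        simp_rw [mul_assoc]
        ring

theorem integral_rpow_mul_one_add_rpow_neg {a b : ℝ} (ha : 0 < a) (hb : 0 < b) :
    ∫ u in Ioi 0, u ^ (a - 1) * (1 + u) ^ (-(a + b)) = Gamma a * Gamma b / Gamma (a + b) := by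
  have := isProbabilityMeasure_gammaMeasure ha one_pos
  have := isProbabilityMeasure_gammaMeasure hb one_pos
  have h := integral_comp_div_gammaMeasure_prod ha hb (f := fun _ => 1) measurable_const (M := 1)
    (fun _ _ => by simp)
  simp only [integral_const, probReal_univ, one_smul, one_mul] at h
  have hΓ : Gamma a * Gamma b ≠ 0 := by positivity
  have hΓab : Gamma (a + b) ≠ 0 := (Gamma_pos_of_pos (add_pos ha hb)).ne'
  field_simp at h ⊢
  linarith

theorem integral_rpow_neg_div_one_add {c : ℝ} (hc0 : 0 < c) (hc1 : c < 1) :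
    ∫ u in Ioi 0, u ^ (-c) / (1 + u) = Gamma (1 - c) * Gamma c := by
  have h := integral_rpow_mul_one_add_rpow_neg (a := 1 - c) (b := c) (by linarith) hc0
  rw [sub_sub_cancel_left, sub_add_cancel, Gamma_one, div_one] at h
  simpa only [rpow_neg_one, div_eq_mul_inv] using h

theorem integrableOn_rpow_neg_div_one_add {c : ℝ} (hc0 : 0 < c) (hc1 : c < 1) :
    IntegrableOn (fun u : ℝ => u ^ (-c) / (1 + u)) (Ioi 0) := by
  have h := integrableOn_rpow_mul_one_add_rpow_neg (a := 1 - c) (b := c) (by linarith) hc0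
  simpa only [sub_sub_cancel_left, sub_add_cancel, rpow_neg_one, div_eq_mul_inv] using h

theorem integral_rpow_neg_div_one_add_mul {c l : ℝ} (hc0 : 0 < c) (hc1 : c < 1) (hl : 0 < l) :
    ∫ u in Ioi 0, u ^ (-c) / (1 + l * u) = l ^ (c - 1) * (Gamma (1 - c) * Gamma c) := by
  have h_subst := integral_comp_mul_left_Ioi (fun y : ℝ => y ^ (-c) / (1 + y)) 0 hl
  rw [mul_zero, smul_eq_mul, integral_rpow_neg_div_one_add hc0 hc1] at h_subst
  rw [rpow_sub_one hl.ne', div_eq_mul_inv, mul_assoc, ← h_subst, ← integral_const_mul]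
  refine setIntegral_congr_fun measurableSet_Ioi fun u (hu : 0 < u) => ?_
  rw [mul_rpow hl.le hu.le, rpow_neg hl.le]
  field_simp

theorem integrableOn_rpow_neg_div_one_add_mul {c l : ℝ} (hc0 : 0 < c) (hc1 : c < 1) (hl : 0 < l) :
    IntegrableOn (fun u : ℝ => u ^ (-c) / (1 + l * u)) (Ioi 0) := by
  have h := ((integrableOn_Ioi_comp_mul_left_iff (fun y : ℝ => y ^ (-c) / (1 + y)) 0 hl).2
    (by simpa using integrableOn_rpow_neg_div_one_add hc0 hc1)).const_mul (l ^ c)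
  refine IntegrableOn.congr_fun h (fun u (hu : 0 < u) => ?_) measurableSet_Ioi
  rw [mul_rpow hl.le hu.le, rpow_neg hl.le]
  field_simp

theorem integral_rpow_neg_div_one_add_mul_one_add_mul {c l : ℝ} (hc0 : 0 < c) (hc1 : c < 1)
    (hl : 0 ≤ l) (hl1 : l ≠ 1) :
    ∫ u in Ioi 0, u ^ (-c) / ((1 + u) * (1 + l * u))
      = (1 - l ^ c) / (1 - l) * (Gamma (1 - c) * Gamma c) := by
  rcases hl.eq_or_lt with rfl | hl0
  · simp only [zero_mul, add_zero, mul_one, zero_rpow hc0.ne', sub_zero, div_one, one_mul]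
    exact integral_rpow_neg_div_one_add hc0 hc1
  have hl1' : 1 - l ≠ 0 := sub_ne_zero.2 hl1.symm
  have h_partial : ∀ u ∈ Ioi (0 : ℝ), u ^ (-c) / ((1 + u) * (1 + l * u))
      = (1 - l)⁻¹ * (u ^ (-c) / (1 + u) - l * (u ^ (-c) / (1 + l * u))) := by
    intro u (hu : 0 < u)
    have : 1 + l * u ≠ 0 := by positivity
    field_simp
    ring
  rw [setIntegral_congr_fun measurableSet_Ioi h_partial, integral_const_mul,
    integral_sub (integrableOn_rpow_neg_div_one_add hc0 hc1)
      ((integrableOn_rpow_neg_div_one_add_mul hc0 hc1 hl0).const_mul l),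
    integral_const_mul, integral_rpow_neg_div_one_add hc0 hc1,
    integral_rpow_neg_div_one_add_mul hc0 hc1 hl0, rpow_sub_one hl0.ne']
  field_simp

theorem integral_rpow_neg_div_one_add_sq {c : ℝ} (hc0 : 0 < c) (hc1 : c < 1) :
    ∫ u in Ioi 0, u ^ (-c) / (1 + u) ^ 2 = c * (Gamma (1 - c) * Gamma c) := by
  have h := integral_rpow_mul_one_add_rpow_neg (a := 1 - c) (b := 1 + c) (by linarith)
    (by linarith)
  rw [sub_sub_cancel_left, show 1 - c + (1 + c) = 2 by ring, Gamma_two, div_one, add_comm 1 c,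
    Gamma_add_one hc0.ne'] at h
  rw [mul_left_comm, ← h]
  refine setIntegral_congr_fun measurableSet_Ioi fun u (hu : 0 < u) => ?_
  rw [rpow_neg (x := 1 + u) (by positivity), rpow_two, div_eq_mul_inv]

theorem integral_exp_neg_mul_mul_div {Ω : Type*} [MeasurableSpace Ω] {μ : Measure Ω}
    [IsProbabilityMeasure μ] {a₀ a₁ a₂ : ℝ} (ha₀ : 0 < a₀) (ha₁ : 0 < a₁) (ha₂ : 0 < a₂)
    {T Y Z : Ω → ℝ} (hT : Measurable T) (hY : Measurable Y) (hZ : Measurable Z)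
    (hT_YZ : IndepFun T (fun ω => (Y ω, Z ω)) μ) (hYZ : IndepFun Y Z μ)
    (hT_law : μ.map T = gammaMeasure a₀ 1) (hY_law : μ.map Y = gammaMeasure a₁ 1)
    (hZ_law : μ.map Z = gammaMeasure a₂ 1) {l : ℝ} (hl : 0 ≤ l) :
    ∫ ω, exp (-(l * (T ω * Y ω / Z ω))) ∂μ
      = Gamma (a₁ + a₂) / (Gamma a₁ * Gamma a₂)
        * ∫ u in Ioi 0, (1 + l * u) ^ (-a₀) * (u ^ (a₁ - 1) * (1 + u) ^ (-(a₁ + a₂))) := by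
  have hYZ_law :
      μ.map (fun ω => (Y ω, Z ω)) = (gammaMeasure a₁ 1).prod (gammaMeasure a₂ 1) := by
    rw [← hY_law, ← hZ_law]
    exact (indepFun_iff_map_prod_eq_prod_map_map hY.aemeasurable hZ.aemeasurable).1 hYZ
  have hφ : Measurable fun p : ℝ × ℝ => l * (p.1 / p.2) := by fun_prop
  have hV_nonneg : ∀ᵐ ω ∂μ, 0 ≤ l * (Y ω / Z ω) := by
    filter_upwards [ae_of_ae_map hY.aemeasurable (hY_law ▸ gammaMeasure_ae_pos),
      ae_of_ae_map hZ.aemeasurable (hZ_law ▸ gammaMeasure_ae_pos)] with ω hYω hZω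
    positivity
  calc ∫ ω, exp (-(l * (T ω * Y ω / Z ω))) ∂μ
      = ∫ ω, exp (-(T ω * (l * (Y ω / Z ω)))) ∂μ := by congr with ω; ring_nf
    _ = ∫ ω, (1 + l * (Y ω / Z ω)) ^ (-a₀) ∂μ :=
        integral_exp_neg_mul_of_indepFun ha₀ hT (hφ.comp (hY.prodMk hZ))
          (hT_YZ.comp measurable_id hφ) hT_law hV_nonneg
    _ = ∫ p, (1 + l * (p.1 / p.2)) ^ (-a₀) ∂(gammaMeasure a₁ 1).prod (gammaMeasure a₂ 1) := by
        have hf : Measurable fun p : ℝ × ℝ => (1 + l * (p.1 / p.2)) ^ (-a₀) := by fun_prop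
        rw [← hYZ_law, integral_map (hY.prodMk hZ).aemeasurable hf.aestronglyMeasurable]
    _ = _ := by
        refine integral_comp_div_gammaMeasure_prod ha₁ ha₂ (f := fun u => (1 + l * u) ^ (-a₀))
          (M := 1) (by fun_prop) fun u hu => ?_
        rw [abs_of_nonneg (by positivity)]
        exact rpow_le_one_of_one_le_of_nonpos (by nlinarith) (by linarith)

theorem integral_exp_neg_mul_gamma_quotient {Ω : Type*} [MeasurableSpace Ω] {μ : Measure Ω}
    [IsProbabilityMeasure μ] {c : ℝ} (hc0 : 0 < c) (hc1 : c < 1)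
    {T Y Z : Ω → ℝ} (hT : Measurable T) (hY : Measurable Y) (hZ : Measurable Z)
    (hT_YZ : IndepFun T (fun ω => (Y ω, Z ω)) μ) (hYZ : IndepFun Y Z μ)
    (hT_law : μ.map T = gammaMeasure 1 1) (hY_law : μ.map Y = gammaMeasure (1 - c) 1)
    (hZ_law : μ.map Z = gammaMeasure c 1) {l : ℝ} (hl : 0 ≤ l) :
    ∫ ω, exp (-(l * (T ω * Y ω / Z ω))) ∂μ
      = (∫ u in Ioi 0, u ^ (-c) / ((1 + u) * (1 + l * u))) / (Gamma (1 - c) * Gamma c) := by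
  rw [integral_exp_neg_mul_mul_div one_pos (by linarith) hc0 hT hY hZ hT_YZ hYZ hT_law hY_law
    hZ_law hl, sub_sub_cancel_left, sub_add_cancel, Gamma_one, one_div_mul_eq_div]
  congr 1
  refine integral_congr_ae (ae_of_all _ fun u => ?_)
  simp only [rpow_neg_one, div_eq_mul_inv, mul_inv]
  ring

/-- For independent gamma variables `G₁, G_{1-c}, G_c` (rate 1),
`E[exp(-λ G₁ G_{1-c}/G_c)] = (1-λ^c)/(1-λ)` for `λ ≥ 0, λ ≠ 1`, and `= c` at `λ = 1`. -/
theorem gamma_quotient_laplace {Ω : Type*} [MeasurableSpace Ω] (μ : Measure Ω)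
    [IsProbabilityMeasure μ] (c : ℝ) (hc : c ∈ Ioo (0:ℝ) 1)
    (X : Fin 3 → Ω → ℝ) (hmeas : ∀ i, Measurable (X i))
    (hind : iIndepFun X μ)
    (h0 : Measure.map (X 0) μ = gammaMeasure 1 1)
    (h1 : Measure.map (X 1) μ = gammaMeasure (1 - c) 1)
    (h2 : Measure.map (X 2) μ = gammaMeasure c 1) :
    (∀ l : ℝ, 0 ≤ l → l ≠ 1 →
      ∫ ω, Real.exp (-(l * (X 0 ω * X 1 ω / X 2 ω))) ∂μ = (1 - l ^ c) / (1 - l)) ∧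
    ∫ ω, Real.exp (-(X 0 ω * X 1 ω / X 2 ω)) ∂μ = c := by
  obtain ⟨hc0, hc1⟩ := hc
  have hΓ : Gamma (1 - c) * Gamma c ≠ 0 := by
    have := Gamma_pos_of_pos (sub_pos.2 hc1)
    positivity
  have laplace := fun {l : ℝ} (hl : 0 ≤ l) => integral_exp_neg_mul_gamma_quotient hc0 hc1
    (hmeas 0) (hmeas 1) (hmeas 2) (hind.indepFun_prodMk hmeas 1 2 0 (by decide) (by decide)).symm
    (hind.indepFun (by decide)) h0 h1 h2 hl
  refine ⟨fun l hl hl1 => ?_, ?_⟩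
  · rw [laplace hl, integral_rpow_neg_div_one_add_mul_one_add_mul hc0 hc1 hl hl1,
      mul_div_cancel_right₀ _ hΓ]
  · simpa only [one_mul, ← sq, integral_rpow_neg_div_one_add_sq hc0 hc1,
      mul_div_cancel_right₀ _ hΓ] using laplace zero_le_one
end

section
/- For α ∈ (1,2), the function h(x) = (1+x)/(x^{2α} - 2cos(πα)x^α + 1) on (0,∞) satisfies h'(x) > 0 for sufficiently small x > 0; hence h is not completely monotone. -/
open Real Set Filter

/-- A function is completely monotone on `(0,∞)` if it is smooth there and its `n`-th
derivative has sign `(-1)^n`. -/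
def CompletelyMonotoneOn (f : ℝ → ℝ) : Prop :=
  ContDiffOn ℝ ⊤ f (Ioi 0) ∧
    ∀ (n : ℕ) (x : ℝ), 0 < x → 0 ≤ (-1 : ℝ) ^ n * iteratedDerivWithin n f (Ioi 0) x

theorem cos_sq_lt_one (α : ℝ) (hα : α ∈ Ioo (1:ℝ) 2) : (Real.cos (π * α))^2 < 1 := by
  obtain ⟨h1, h2⟩ := hα
  have hπ := Real.pi_pos
  have hle : -1 ≤ Real.cos (π * α) := Real.neg_one_le_cos _
  have hge : Real.cos (π * α) ≤ 1 := Real.cos_le_one _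
  have hne1 : Real.cos (π * α) ≠ 1 := by
    intro h
    rw [Real.cos_eq_one_iff] at h
    obtain ⟨n, hn⟩ := h
    have : (n:ℝ) * 2 = α := by
      have hpe : π * ((n:ℝ) * 2) = π * α := by nlinarith [hn]
      exact mul_left_cancel₀ (ne_of_gt hπ) hpe
    have h1' : (1:ℝ) < (n:ℝ) * 2 := by rw [this]; exact h1
    have h2' : ((n:ℝ)) * 2 < 2 := by rw [this]; exact h2
    have : (0:ℝ) < n := by linarith
    have : (n:ℝ) < 1 := by linarith
    have h0 : (0:ℤ) < n := by exact_mod_cast ‹(0:ℝ) < n›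
    have h1'' : (n:ℤ) < 1 := by exact_mod_cast ‹(n:ℝ) < 1›
    omega
  have hnem1 : Real.cos (π * α) ≠ -1 := by
    intro h
    rw [Real.cos_eq_neg_one_iff] at h
    obtain ⟨k, hk⟩ := h
    have : α = 1 + (k:ℝ) * 2 := by
      have hpe : π * α = π * (1 + (k:ℝ) * 2) := by nlinarith [hk]
      exact mul_left_cancel₀ (ne_of_gt hπ) hpe
    have h1' : (1:ℝ) < 1 + (k:ℝ)*2 := by rw [← this]; exact h1
    have h2' : (1:ℝ) + (k:ℝ)*2 < 2 := by rw [← this]; exact h2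
    have : (0:ℝ) < k := by linarith
    have : (k:ℝ) < 1 := by linarith
    have h0 : (0:ℤ) < k := by exact_mod_cast ‹(0:ℝ) < k›
    have h1'' : (k:ℤ) < 1 := by exact_mod_cast ‹(k:ℝ) < 1›
    omega
  have := lt_of_le_of_ne hge hne1
  have := lt_of_le_of_ne hle (Ne.symm hnem1)
  nlinarith

/-- For `α ∈ (1,2)`, `h(x) = (1+x)/(x^{2α} - 2cos(πα)x^α + 1)` has `h' > 0` near `0+`,
hence `h` is not completely monotone. -/
theorem not_completelyMonotone (α : ℝ) (hα : α ∈ Ioo (1:ℝ) 2) :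
    (∃ ε : ℝ, 0 < ε ∧ ∀ x : ℝ, 0 < x → x < ε →
      0 < deriv (fun x : ℝ =>
        (1 + x) / (x ^ (2 * α) - 2 * Real.cos (π * α) * x ^ α + 1)) x) ∧
    ¬ CompletelyMonotoneOn (fun x : ℝ =>
        (1 + x) / (x ^ (2 * α) - 2 * Real.cos (π * α) * x ^ α + 1)) := by
  obtain ⟨h1, h2⟩ := hα
  set c := Real.cos (π * α) with hc
  have hαpos : (0:ℝ) < α := by linarith
  have hc2 : c^2 < 1 := cos_sq_lt_one α ⟨h1, h2⟩
  set h : ℝ → ℝ := fun x : ℝ => (1 + x) / (x ^ (2 * α) - 2 * c * x ^ α + 1) with hh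
  set D : ℝ → ℝ := fun x : ℝ => x ^ (2 * α) - 2 * c * x ^ α + 1 with hD
  -- D is positive everywhere on [0, ∞)
  have hDpos : ∀ x : ℝ, 0 ≤ x → 0 < D x := by
    intro x hx
    have key : x ^ (2 * α) = (x ^ α)^2 := by
      rw [mul_comm, Real.rpow_mul hx, Real.rpow_two]
    have hy : 0 ≤ x ^ α := Real.rpow_nonneg hx α
    simp only [hD, key]
    nlinarith [sq_nonneg (x ^ α - c)]
  -- derivative formula
  have hderiv : ∀ x : ℝ, 0 < x →
      HasDerivAt h ((D x - (1 + x) * (2*α * x ^ (2*α - 1) - 2*c*(α * x ^ (α - 1)))) / (D x)^2) x := by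
    intro x hx
    have hxne : x ≠ 0 := ne_of_gt hx
    have hN : HasDerivAt (fun x : ℝ => 1 + x) 1 x := by
      simpa using (hasDerivAt_id x).const_add 1
    have hr1 : HasDerivAt (fun x : ℝ => x ^ (2*α)) (2*α * x ^ (2*α - 1)) x :=
      Real.hasDerivAt_rpow_const (Or.inl hxne)
    have hr2 : HasDerivAt (fun x : ℝ => x ^ α) (α * x ^ (α - 1)) x :=
      Real.hasDerivAt_rpow_const (Or.inl hxne)
    have hDd : HasDerivAt D (2*α * x ^ (2*α - 1) - 2*c*(α * x ^ (α - 1))) x := by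
      exact (hr1.sub ((hr2.const_mul (2*c)))).add_const 1
    have := hN.div hDd (ne_of_gt (hDpos x hx.le))
    exact this.congr_deriv (by ring)
  -- limit of the derivative as x → 0+
  have hrtend : ∀ p : ℝ, 0 < p → Tendsto (fun x : ℝ => x ^ p) (nhdsWithin 0 (Ioi 0)) (nhds 0) := by
    intro p hp
    have : ContinuousAt (fun x : ℝ => x ^ p) 0 :=
      Real.continuousAt_rpow_const 0 p (Or.inr hp.le)
    have h0 : (0:ℝ) ^ p = 0 := Real.zero_rpow (ne_of_gt hp)
    simpa [h0] using this.continuousWithinAt.tendsto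
  have hGlim : Tendsto (fun x : ℝ =>
      (D x - (1 + x) * (2*α * x ^ (2*α - 1) - 2*c*(α * x ^ (α - 1)))) / (D x)^2)
      (nhdsWithin 0 (Ioi 0)) (nhds 1) := by
    have t1 := hrtend (2*α) (by linarith)
    have t2 := hrtend α hαpos
    have t3 := hrtend (2*α - 1) (by linarith)
    have t4 := hrtend (α - 1) (by linarith)
    have tx : Tendsto (fun x : ℝ => x) (nhdsWithin 0 (Ioi 0)) (nhds 0) :=
      (continuous_id.tendsto 0).mono_left nhdsWithin_le_nhds
    have hDt : Tendsto D (nhdsWithin 0 (Ioi 0)) (nhds 1) := by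
      have h' := ((t1.sub (t2.const_mul (2*c))).add_const 1)
      have : Tendsto (fun x : ℝ => x ^ (2*α) - 2*c * x ^ α + 1)
          (nhdsWithin 0 (Ioi 0)) (nhds 1) := by
        convert h' using 2; norm_num
      exact this
    have hnum : Tendsto (fun x : ℝ =>
        D x - (1 + x) * (2*α * x ^ (2*α - 1) - 2*c*(α * x ^ (α - 1))))
        (nhdsWithin 0 (Ioi 0)) (nhds 1) := by
      have h2' : Tendsto (fun x : ℝ => (1 + x) * (2*α * x ^ (2*α - 1) - 2*c*(α * x ^ (α - 1))))
          (nhdsWithin 0 (Ioi 0)) (nhds 0) := by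
        have h'' := ((tx.const_add 1).mul
          ((t3.const_mul (2*α)).sub ((t4.const_mul α).const_mul (2*c))))
        convert h'' using 2; norm_num
      have := hDt.sub h2'
      convert this using 2; norm_num
    have hden : Tendsto (fun x : ℝ => (D x)^2) (nhdsWithin 0 (Ioi 0)) (nhds 1) := by
      simpa using hDt.pow 2
    have := hnum.div hden (by norm_num)
    rw [div_one] at this
    exact this
  have hev : ∀ᶠ x in nhdsWithin (0:ℝ) (Ioi 0), 0 < deriv h x := by
    have hpos : ∀ᶠ x in nhdsWithin (0:ℝ) (Ioi 0),
        0 < (D x - (1 + x) * (2*α * x ^ (2*α - 1) - 2*c*(α * x ^ (α - 1)))) / (D x)^2 :=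
      hGlim.eventually (eventually_gt_nhds (by norm_num))
    filter_upwards [hpos, self_mem_nhdsWithin] with x hx hmem
    rw [(hderiv x hmem).deriv]
    exact hx
  obtain ⟨u, hu, hsub⟩ := mem_nhdsGT_iff_exists_Ioo_subset.mp hev
  refine ⟨⟨u, hu, fun x hx hxu => hsub ⟨hx, hxu⟩⟩, ?_⟩
  rintro ⟨-, hsign⟩
  have hu' : (0:ℝ) < u := hu
  have hx0 : (0:ℝ) < u / 2 := by linarith
  have hxu : u / 2 < u := by linarith
  have hd := hsub ⟨hx0, hxu⟩
  have := hsign 1 (u/2) hx0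
  rw [iteratedDerivWithin_one,
    derivWithin_of_isOpen isOpen_Ioi hx0] at this
  simp only [pow_one] at this
  have : deriv h (u/2) ≤ 0 := by linarith
  exact absurd hd (not_lt.mpr this)
end
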